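/- arXiv:1401.6263 — 2 statements merged into one kernel-verified Lean document; each statement's English description precedes it below -/
import Mathlib

section
/- Let m be a natural number and let G = (Fin m → ℤ) be the free abelian group of rank m. An element u of the group ring ℤ[G] (the additive monoid algebra AddMonoidAlgebra ℤ G) is a unit if and only if there exists g ∈ G such that u = single g 1 or u = single g (−1); that is, the units of ℤ[G] are precisely the elements ±e^g for g ∈ G (i.e., up to sign, the monomials). -/
/-!
`ℤᵐ`, like any product of linearly ordered groups, has the two-unique-sums property: for finite
`S, T` with `#S * #T > 1` there are two distinct pairs in `S × T` whose sums are each reached in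
only one way. If `p * q = 1` and `p` or `q` has two monomials, apply this to the supports: the
two sums are distinct and the coefficient of `p * q` at each is a product of nonzero
coefficients, so `p * q` has two monomials. Hence a unit is a monomial `r e^a`, and `r` is a unit
by the augmentation map `e^a ↦ 1`.
-/

open Finset

namespace AddMonoidAlgebra

variable {R A : Type*} [Semiring R] [NoZeroDivisors R]

theorem card_support_mul_card_support_le_one_of_mul_eq_one [AddZeroClass A] [TwoUniqueSums A]
    {p q : AddMonoidAlgebra R A} (h : p * q = 1) :
    #p.coeff.support * #q.coeff.support ≤ 1 := by
  by_contra! hcard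
  obtain ⟨x, hx, y, hy, hxy, hux, huy⟩ := TwoUniqueSums.uniqueAdd_of_one_lt_card hcard
  have sum_eq_zero {z : A × A} (hz : z ∈ p.coeff.support ×ˢ q.coeff.support)
      (hu : UniqueAdd p.coeff.support q.coeff.support z.1 z.2) : z.1 + z.2 = 0 := by
    rw [mem_product, Finsupp.mem_support_iff, Finsupp.mem_support_iff] at hz
    have hmem : z.1 + z.2 ∈ (p * q).coeff.support := by
      rw [Finsupp.mem_support_iff, coeff_mul_add_of_uniqueAdd hu]
      exact mul_ne_zero hz.1 hz.2
    rw [h, one_def, coeff_single] at hmem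
    exact mem_singleton.1 (Finsupp.support_single_subset hmem)
  have hy' := mem_product.1 hy
  have hyx := hux hy'.1 hy'.2 ((sum_eq_zero hy huy).trans (sum_eq_zero hx hux).symm)
  exact hxy (Prod.ext_iff.2 hyx).symm

theorem exists_eq_single_of_mul_eq_one [AddZeroClass A] [TwoUniqueSums A]
    {p q : AddMonoidAlgebra R A} (h : p * q = 1) : ∃ a r, p = single a r := by
  have hcard := card_support_mul_card_support_le_one_of_mul_eq_one h
  suffices #p.coeff.support ≤ 1 by
    obtain ⟨a, r, hp⟩ := Finsupp.card_support_le_one'.1 this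
    exact ⟨a, r, coeff_injective hp⟩
  rcases q.coeff.support.eq_empty_or_nonempty with hq | hq
  · rw [Finsupp.support_eq_empty, coeff_eq_zero] at hq
    rw [← mul_one p, ← h, hq, mul_zero, mul_zero, coeff_zero, Finsupp.support_zero, card_empty]
    exact zero_le_one
  · exact le_of_mul_le_of_one_le_left hcard (card_pos.2 hq)

theorem isUnit_iff_exists_single [AddGroup A] [TwoUniqueSums A] {u : AddMonoidAlgebra R A} :
    IsUnit u ↔ ∃ a r, IsUnit r ∧ u = single a r := by
  constructor
  · intro hu
    obtain ⟨v, huv⟩ := hu.exists_right_inv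
    obtain ⟨a, r, rfl⟩ := exists_eq_single_of_mul_eq_one huv
    let augmentation : AddMonoidAlgebra R A →+* R :=
      (uniqueRingEquiv Unit).toRingHom.comp (mapDomainRingHom R (0 : A →+ Unit))
    exact ⟨a, r, by simpa [augmentation] using hu.map augmentation, rfl⟩
  · rintro ⟨a, r, hr, rfl⟩
    have : IsUnit (r, Multiplicative.ofAdd a) := Prod.isUnit_iff.2 ⟨hr, Group.isUnit _⟩
    simpa using this.map singleHom

end AddMonoidAlgebra

/-- The units of the group ring `ℤ[G]` of the free abelian group `G = Fin m → ℤ`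
are precisely the elements `± e^g` for `g ∈ G`, i.e. up to sign, the monomials. -/
theorem units_of_integral_group_ring_free_abelian (m : ℕ)
    (u : AddMonoidAlgebra ℤ (Fin m → ℤ)) :
    IsUnit u ↔ ∃ g : Fin m → ℤ,
      u = AddMonoidAlgebra.single g 1 ∨ u = AddMonoidAlgebra.single g (-1) := by
  rw [AddMonoidAlgebra.isUnit_iff_exists_single]
  constructor
  · rintro ⟨g, r, hr, rfl⟩
    rcases Int.isUnit_iff.1 hr with rfl | rfl
    exacts [⟨g, .inl rfl⟩, ⟨g, .inr rfl⟩]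
  · rintro ⟨g, rfl | rfl⟩
    exacts [⟨g, 1, isUnit_one, rfl⟩, ⟨g, -1, isUnit_one.neg, rfl⟩]
end

section
/- Let m be a natural number and let G = (Fin m → ℤ) be the free abelian group of rank m. The group of units of the group ring ℤ[G] (the additive monoid algebra AddMonoidAlgebra ℤ G) is isomorphic, as a group, to (ℤ/2ℤ) × G, via the map sending (ε, g) to ±e^g according to the sign ε. -/
/-!
Order the free abelian group `ℤ^m` lexicographically; then for any two finite nonempty subsets
`A`, `B`, not both singletons, at least two distinct pairs `(a, b) ∈ A × B` have a sum `a + b`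
attained by no other pair (`TwoUniqueSums`). If `u * v = 1` in `R[G]` with `R` a domain, the
coefficient of `u * v` at such a uniquely attained sum is a product of two nonzero coefficients,
so both sums would equal `0`, contradicting uniqueness. Hence `u` and `v` are monomials, and a
monomial `r e^g` is a unit exactly when `r` is a unit of `R`.
-/

open Finset

namespace AddMonoidAlgebra

variable {R G : Type*} [Semiring R]

theorem card_support_mul_card_support_le_one_of_mul_eq_one_s1 [NoZeroDivisors R] [AddZeroClass G]
    [TwoUniqueSums G] {u v : R[G]} (h : u * v = 1) :
    #u.coeff.support * #v.coeff.support ≤ 1 := by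
  by_contra! hcard
  obtain ⟨p, hp, q, hq, hpq, hp_unique, hq_unique⟩ :=
    TwoUniqueSums.uniqueAdd_of_one_lt_card hcard
  have unique_sum_eq_zero : ∀ x ∈ u.coeff.support ×ˢ v.coeff.support,
      UniqueAdd u.coeff.support v.coeff.support x.1 x.2 → x.1 + x.2 = 0 := by
    intro x hx hx_unique
    rw [mem_product, Finsupp.mem_support_iff, Finsupp.mem_support_iff] at hx
    have hne : (u * v).coeff (x.1 + x.2) ≠ 0 := by
      rw [coeff_mul_add_of_uniqueAdd hx_unique]
      exact mul_ne_zero hx.1 hx.2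
    rw [h, one_def, coeff_single, Finsupp.single_apply_ne_zero] at hne
    exact hne.1
  rw [mem_product] at hq
  obtain ⟨h₁, h₂⟩ := hp_unique hq.1 hq.2 <| by
    rw [unique_sum_eq_zero q (mem_product.2 hq) hq_unique, unique_sum_eq_zero p hp hp_unique]
  exact hpq (Prod.ext h₁ h₂).symm

theorem exists_eq_single_of_mul_eq_one_s1 [NoZeroDivisors R] [Nontrivial R] [AddZeroClass G]
    [TwoUniqueSums G] {u v : R[G]} (h : u * v = 1) : ∃ g r, u = single g r := by
  have hu : u.coeff.support.Nonempty :=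
    Finsupp.support_nonempty_iff.2 (coeff_eq_zero.not.2 (left_ne_zero_of_mul_eq_one h))
  have hv : v.coeff.support.Nonempty :=
    Finsupp.support_nonempty_iff.2 (coeff_eq_zero.not.2 (right_ne_zero_of_mul_eq_one h))
  have hcard : #u.coeff.support = 1 :=
    le_antisymm ((Nat.le_mul_of_pos_right _ hv.card_pos).trans
      (card_support_mul_card_support_le_one_of_mul_eq_one_s1 h)) hu.card_pos
  obtain ⟨g, -, hg⟩ := Finsupp.card_support_eq_one.1 hcard
  exact ⟨g, u.coeff g, coeff_injective (by rw [coeff_single]; exact hg)⟩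

theorem single_eq_one_iff [Nontrivial R] [Zero G] {g : G} {r : R} :
    single g r = 1 ↔ g = 0 ∧ r = 1 := by
  simp [one_def, single_inj]

theorem exists_single_eq_of_isUnit [NoZeroDivisors R] [Nontrivial R] [AddMonoid G]
    [TwoUniqueSums G] {u : R[G]} (hu : IsUnit u) : ∃ (g : G) (r : Rˣ), single g (r : R) = u := by
  obtain ⟨w, rfl⟩ := hu
  obtain ⟨g, r, hr⟩ := exists_eq_single_of_mul_eq_one_s1 w.mul_inv
  obtain ⟨g', s, hs⟩ := exists_eq_single_of_mul_eq_one_s1 w.inv_mul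
  have hrs := w.mul_inv
  have hsr := w.inv_mul
  rw [hr, hs, single_mul_single, single_eq_one_iff] at hrs hsr
  exact ⟨g, ⟨r, s, hrs.2, hsr.2⟩, hr.symm⟩

variable (R G) in
noncomputable def singleUnitsHom [AddGroup G] : Rˣ × Multiplicative G →* R[G]ˣ :=
  (Units.map singleHom).comp <|
    MulEquiv.prodUnits.symm.toMonoidHom.comp ((MonoidHom.id Rˣ).prodMap toUnits.toMonoidHom)

theorem val_singleUnitsHom [AddGroup G] (p : Rˣ × Multiplicative G) :
    (singleUnitsHom R G p : R[G]) = single p.2.toAdd (p.1 : R) := rfl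

theorem singleUnitsHom_bijective [NoZeroDivisors R] [Nontrivial R] [AddGroup G]
    [TwoUniqueSums G] : Function.Bijective (singleUnitsHom R G) := by
  refine ⟨(injective_iff_map_eq_one _).2 fun p hp => ?_, fun u => ?_⟩
  · rw [← Units.val_inj, val_singleUnitsHom, Units.val_one, single_eq_one_iff,
      Units.val_eq_one] at hp
    exact Prod.ext hp.2 hp.1
  · obtain ⟨g, r, h⟩ := exists_single_eq_of_isUnit u.isUnit
    exact ⟨(r, .ofAdd g), Units.ext h⟩

variable (R G) in
noncomputable def unitsMulEquiv [NoZeroDivisors R] [Nontrivial R] [AddGroup G]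
    [TwoUniqueSums G] : Rˣ × Multiplicative G ≃* R[G]ˣ :=
  .ofBijective _ singleUnitsHom_bijective

end AddMonoidAlgebra

def Int.unitsMulEquivZModTwo : ℤˣ ≃* Multiplicative (ZMod 2) where
  toFun u := .ofAdd (if u = 1 then 0 else 1)
  invFun ε := if ε.toAdd = 0 then 1 else -1
  left_inv := by decide
  right_inv := by decide
  map_mul' := by decide

/-- The group of units of the group ring `ℤ[G]` of the free abelian group
`G = Fin m → ℤ` is isomorphic to `(ℤ/2ℤ) × G`, via the map sending `(ε, g)` to
`± e^g` according to the sign `ε`. -/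
theorem unit_group_of_integral_group_ring_free_abelian (m : ℕ) :
    ∃ φ : Multiplicative (ZMod 2 × (Fin m → ℤ)) ≃* (AddMonoidAlgebra ℤ (Fin m → ℤ))ˣ,
      ∀ (ε : ZMod 2) (g : Fin m → ℤ),
        ((φ (Multiplicative.ofAdd (ε, g)) : (AddMonoidAlgebra ℤ (Fin m → ℤ))ˣ) :
            AddMonoidAlgebra ℤ (Fin m → ℤ)) =
          if ε = 0 then AddMonoidAlgebra.single g 1 else AddMonoidAlgebra.single g (-1) := by
  refine ⟨(MulEquiv.prodMultiplicative _ _).trans <|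
    (Int.unitsMulEquivZModTwo.symm.prodCongr (.refl _)).trans
      (AddMonoidAlgebra.unitsMulEquiv ℤ _),
    fun ε g => ?_⟩
  fin_cases ε <;> rfl
end
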